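/- Let X be a compact Hausdorff space, ν ∈ H(X), and B ⊆ X a closed subset. Then ν ∈ H_X(B) if and only if ν(φ_1, a, b) = ν(φ_2, a, b) for all 0 ≤ a < b ≤ 1 and all continuous φ_1, φ_2 : X → ℝ whose restrictions to B coincide. -/

import Mathlib

open scoped Topology

/-- The index set `S(X)`: triples `(φ, a, b)` with `φ : X → ℝ` continuous and
`0 ≤ a < b ≤ 1`. -/
structure SIdx (X : Type u) [TopologicalSpace X] : Type u where
  φ : C(X, ℝ)
  a : ℝ
  b : ℝ
  ha : 0 ≤ a
  hab : a < b
  hb : b ≤ 1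

/-- `α : ℝ → X` is a step function on `[0,1)`: there is a partition
`0 = t 0 < t 1 < ⋯ < t k = 1` with `α` constant on each `[t j, t (j+1))`. -/
def IsStep {X : Type u} (α : ℝ → X) : Prop :=
  ∃ (k : ℕ) (t : ℕ → ℝ), 1 ≤ k ∧ t 0 = 0 ∧ t k = 1 ∧ (∀ j < k, t j < t (j + 1)) ∧
    ∀ j < k, ∀ s ∈ Set.Ico (t j) (t (j + 1)), α s = α (t j)

/-- The embedding `e_X`, sending `α` to the point of `∏_{S(X)} ℝ` whose
`(φ, a, b)`-coordinate is `(1/(b-a)) ∫_a^b φ(α t) dt`. -/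
noncomputable def eHM {X : Type u} [TopologicalSpace X] (α : ℝ → X) : SIdx X → ℝ :=
  fun s => (1 / (s.b - s.a)) * ∫ t in s.a..s.b, s.φ (α t)

/-- `H(X)` as a subset of `∏_{S(X)} ℝ`: the closure of the image under `e_X`
of the set of step functions. -/
def HSet (X : Type u) [TopologicalSpace X] : Set (SIdx X → ℝ) :=
  closure (eHM '' {α : ℝ → X | IsStep α})

/-- `H(X)` as a topological space (subspace of the product `∏_{S(X)} ℝ`). -/
abbrev HSp (X : Type u) [TopologicalSpace X] : Type u := ↥(HSet X)

/-- `H_X(A)`: the closure of the image under `e_X` of the step functions taking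
values in `A` on `[0,1)`. -/
def HSetOn (X : Type u) [TopologicalSpace X] (A : Set X) : Set (SIdx X → ℝ) :=
  closure (eHM '' {α : ℝ → X | IsStep α ∧ ∀ t ∈ Set.Ico (0:ℝ) 1, α t ∈ A})

/-- The support of `ν`: the intersection of all closed `A ⊆ X` with `ν ∈ H_X(A)`. -/
def suppH {X : Type u} [TopologicalSpace X] (ν : SIdx X → ℝ) : Set X :=
  ⋂₀ {A : Set X | IsClosed A ∧ ν ∈ HSetOn X A}

/-- The reindexing map `R_f : ∏_{S(X)} ℝ → ∏_{S(Y)} ℝ`, `R_f x (ψ,a,b) = x (ψ∘f,a,b)`. -/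
def reindex {X : Type u} {Y : Type v} [TopologicalSpace X] [TopologicalSpace Y]
    (f : C(X, Y)) : (SIdx X → ℝ) → (SIdx Y → ℝ) :=
  fun x s => x ⟨s.φ.comp f, s.a, s.b, s.ha, s.hab, s.hb⟩

lemma isStep_comp {X : Type u} {Y : Type v} (f : X → Y) {α : ℝ → X} (h : IsStep α) :
    IsStep (f ∘ α) := by
  obtain ⟨k, t, hk, h0, h1, hm, hc⟩ := h
  exact ⟨k, t, hk, h0, h1, hm, fun j hj s hs => congrArg f (hc j hj s hs)⟩

lemma isStep_const {X : Type u} (x : X) : IsStep (fun _ : ℝ => x) :=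
  ⟨1, fun j => (j : ℝ), le_refl 1, by simp, by simp,
    fun j _ => by simp, fun _ _ _ _ => rfl⟩

/-- The point `e_X(α)` of `H(X)`, for a step function `α`. -/
noncomputable def toH {X : Type u} [TopologicalSpace X] (α : ℝ → X) (h : IsStep α) : HSp X :=
  ⟨eHM α, subset_closure ⟨α, h, rfl⟩⟩

lemma continuous_reindex {X : Type u} {Y : Type v} [TopologicalSpace X] [TopologicalSpace Y]
    (f : C(X, Y)) : Continuous (reindex f) :=
  continuous_pi fun _ => continuous_apply _

lemma reindex_mapsTo {X : Type u} {Y : Type v} [TopologicalSpace X] [TopologicalSpace Y]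
    (f : C(X, Y)) : Set.MapsTo (reindex f) (HSet X) (HSet Y) := by
  intro x hx
  have h2 := image_closure_subset_closure_image (s := eHM '' {α : ℝ → X | IsStep α})
    (continuous_reindex f)
  have h3 : reindex f '' (eHM '' {α : ℝ → X | IsStep α}) ⊆ eHM '' {α : ℝ → Y | IsStep α} := by
    rintro _ ⟨_, ⟨α, hα, rfl⟩, rfl⟩
    exact ⟨f ∘ α, isStep_comp f hα, rfl⟩
  exact closure_mono h3 (h2 ⟨x, hx, rfl⟩)

/-- The map `H(f) : H(X) → H(Y)` induced by a continuous `f : X → Y`, i.e. the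
restriction of the reindexing map `R_f`. -/
noncomputable def Hmap {X : Type u} {Y : Type v} [TopologicalSpace X] [TopologicalSpace Y]
    (f : C(X, Y)) : C(HSp X, HSp Y) where
  toFun x := ⟨reindex f x.1, reindex_mapsTo f x.2⟩
  continuous_toFun :=
    Continuous.subtype_mk ((continuous_reindex f).comp continuous_subtype_val) _

/-- The unit `η_X : X → H(X)`, `x ↦ e_X(const x)`. -/
noncomputable def etaMap (X : Type u) [TopologicalSpace X] : C(X, HSp X) where
  toFun x := toH (fun _ : ℝ => x) (isStep_const x)
  continuous_toFun := by
    refine Continuous.subtype_mk (continuous_pi fun s => ?_) _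
    simp only [eHM, intervalIntegral.integral_const]
    exact continuous_const.mul ((s.φ.continuous).const_smul (s.b - s.a))
/-- The index (0-based) of the subinterval `[i/n, (i+1)/n)` of `[0,1)` containing `s`
(as a natural number, clipped to `n - 1`). -/
noncomputable def stepIdxNat (n : ℕ) (s : ℝ) : ℕ := min ⌊s * n⌋₊ (n - 1)

lemma stepIdxNat_eq {n j : ℕ} (hj : j < n) {s : ℝ}
    (h1 : (j : ℝ) / n ≤ s) (h2 : s < ((j : ℝ) + 1) / n) : stepIdxNat n s = j := by
  have hn : (0:ℝ) < n := by
    have : 0 < n := by omega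
    exact_mod_cast this
  have h1' : (j : ℝ) ≤ s * n := by rw [div_le_iff₀ hn] at h1; exact h1
  have h2' : s * n < (j : ℝ) + 1 := by rw [lt_div_iff₀ hn] at h2; exact h2
  have hfl : ⌊s * n⌋₊ = j := by
    rw [Nat.floor_eq_iff (le_trans (Nat.cast_nonneg j) h1')]
    exact ⟨h1', h2'⟩
  unfold stepIdxNat
  omega

lemma isStep_stepIdxNat (n : ℕ) : IsStep (stepIdxNat n) := by
  rcases Nat.eq_zero_or_pos n with rfl | hn
  · exact ⟨1, fun j => (j : ℝ), le_refl 1, by simp, by simp, fun j _ => by simp,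
      fun j hj s hs => by simp [stepIdxNat]⟩
  · have hnR : (0:ℝ) < n := by exact_mod_cast hn
    refine ⟨n, fun j => (j : ℝ) / n, hn, by simp, by field_simp,
      fun j hj => ?_, fun j hj s hs => ?_⟩
    · exact (div_lt_div_iff_of_pos_right hnR).mpr (by push_cast; linarith)
    · obtain ⟨hs1, hs2⟩ := hs
      have hs2' : s < ((j : ℝ) + 1) / n := by
        convert hs2 using 2
        · rfl
        push_cast
        ring
      rw [stepIdxNat_eq hj hs1 hs2',
        stepIdxNat_eq hj (le_refl _) ((div_lt_div_iff_of_pos_right hnR).mpr (by linarith))]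
/-- The step function `β : [0,1) → K_n`, `β(s) = i` for `s ∈ [i/n, (i+1)/n)`,
with `K_n` realized as `Fin n` (0-based indexing). -/
noncomputable def stepIdx (n : ℕ) [NeZero n] (s : ℝ) : Fin n :=
  ⟨stepIdxNat n s, by
    have := NeZero.ne n
    unfold stepIdxNat
    omega⟩

lemma isStep_stepIdx (n : ℕ) [NeZero n] : IsStep (stepIdx n) := by
  have hn := NeZero.ne n
  have h : stepIdx n =
      (fun m : ℕ => (⟨min m (n - 1), by omega⟩ : Fin n)) ∘ stepIdxNat n := by
    funext s
    apply Fin.ext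
    simp [stepIdx, stepIdxNat, min_assoc]
  rw [h]
  exact isStep_comp _ (isStep_stepIdxNat n)

/-- The diagonal step function `α : [0,1) → K_n × K_n`, `α(s) = (i,i)` for
`s ∈ [i/n, (i+1)/n)`. -/
noncomputable def alphaDiag (n : ℕ) [NeZero n] : ℝ → Fin n × Fin n :=
  fun s => (stepIdx n s, stepIdx n s)

lemma isStep_alphaDiag (n : ℕ) [NeZero n] : IsStep (alphaDiag n) :=
  isStep_comp (fun i : Fin n => (i, i)) (isStep_stepIdx n)

/-- The step function `α_i : [0,1) → K_n × K_n`, `α_i(s) = (i,j)` for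
`s ∈ [j/n, (j+1)/n)`. -/
noncomputable def alphaRow (n : ℕ) [NeZero n] (i : Fin n) : ℝ → Fin n × Fin n :=
  fun s => (i, stepIdx n s)

lemma isStep_alphaRow (n : ℕ) [NeZero n] (i : Fin n) : IsStep (alphaRow n i) :=
  isStep_comp (fun j : Fin n => (i, j)) (isStep_stepIdx n)

/-- The step function `A_n : [0,1) → H(K_n × K_n)`, `A_n(s) = e(α_i)` for
`s ∈ [i/n, (i+1)/n)`. -/
noncomputable def An (n : ℕ) [NeZero n] : ℝ → HSp (Fin n × Fin n) :=
  fun s => toH (alphaRow n (stepIdx n s)) (isStep_alphaRow n _)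

lemma isStep_An (n : ℕ) [NeZero n] : IsStep (An n) :=
  isStep_comp (fun i : Fin n => toH (alphaRow n i) (isStep_alphaRow n i)) (isStep_stepIdx n)

/-- The step function `γ_i^{(n)} : [0,1) → D = {0,1}` which is `1` on
`[i/n, (i+1)/n)` and `0` elsewhere, with `D` realized as `Bool`. -/
noncomputable def gammaStep (n i : ℕ) : ℝ → Bool := fun s => decide (stepIdxNat n s = i)

lemma isStep_gammaStep (n i : ℕ) : IsStep (gammaStep n i) :=
  isStep_comp (fun m : ℕ => decide (m = i)) (isStep_stepIdxNat n)

/-- The step function `B_n : [0,1) → H(D)`, `B_n(s) = e(γ_i^{(n)})` for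
`s ∈ [i/n, (i+1)/n)`. -/
noncomputable def Bn (n : ℕ) : ℝ → HSp Bool :=
  fun s => toH (gammaStep n (stepIdxNat n s)) (isStep_gammaStep n _)

lemma isStep_Bn (n : ℕ) : IsStep (Bn n) :=
  isStep_comp (fun m : ℕ => toH (gammaStep n m) (isStep_gammaStep n m)) (isStep_stepIdxNat n)

/-! Functions agreeing on `B` have equal averages along step functions with values in `B`, and
equality of two coordinates is a closed condition; this gives one direction. Conversely, given
finitely many coordinates `(φ_s, a_s, b_s)` and `ε > 0`, let `U ⊇ B` be open such that on `U`
every `φ_s` is `ε`-close to its value at a chosen point `g x ∈ B`, and let `u` be an Urysohn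
function, `0` on `B` and `1` off `U`. The hypothesis gives `ν(u, a, b) = ν(0, a, b) = 0`.
Approximating `ν` by `e_X(β)` also on the coordinates `(u, a_s, b_s)` forces `β` to spend little
time outside `U`, so the point `e_X(g ∘ β)` of `H_X(B)` approximates `ν` on the given
coordinates. -/

open MeasureTheory Set Filter

lemma mem_closure_pi_iff_forall_finset {ι α : Type*} [PseudoMetricSpace α] {E : Set (ι → α)}
    {ν : ι → α} :
    ν ∈ closure E ↔ ∀ (I : Finset ι) (δ : ℝ), 0 < δ → ∃ x ∈ E, ∀ i ∈ I, dist (x i) (ν i) < δ := by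
  have hbasis := hasBasis_pi (α := fun _ : ι => α) fun i => Metric.nhds_basis_ball (x := ν i)
  rw [← nhds_pi] at hbasis
  rw [mem_closure_iff_nhds_basis hbasis]
  constructor
  · intro h I δ hδ
    obtain ⟨x, hxE, hx⟩ := h (↑I, fun _ => δ) ⟨I.finite_toSet, fun _ _ => hδ⟩
    exact ⟨x, hxE, fun i hi => hx i hi⟩
  · rintro h ⟨S, r⟩ ⟨hS, hr⟩
    have hsmall : ∀ᶠ δ in 𝓝[>] (0 : ℝ), ∀ i ∈ S, δ < r i :=
      (eventually_all_finite hS).2 fun i hi => nhdsWithin_le_nhds (eventually_lt_nhds (hr i hi))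
    obtain ⟨δ, hδr, hδ⟩ := (hsmall.and self_mem_nhdsWithin).exists
    obtain ⟨x, hxE, hx⟩ := h hS.toFinset δ hδ
    exact ⟨x, hxE, fun i hi => (hx i (hS.mem_toFinset.2 hi)).trans (hδr i hi)⟩

lemma exists_retraction_dist_lt_on_nhds {X Y : Type*} [TopologicalSpace X] [PseudoMetricSpace Y]
    {f : X → Y} (hf : Continuous f) {B : Set X} (hB : B.Nonempty) {ε : ℝ} (hε : 0 < ε) :
    ∃ U, IsOpen U ∧ B ⊆ U ∧ ∃ g : X → X, (∀ x, g x ∈ B) ∧ ∀ x ∈ U, dist (f (g x)) (f x) < ε := by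
  refine ⟨f ⁻¹' Metric.thickening ε (f '' B), Metric.isOpen_thickening.preimage hf,
    fun x hx => Metric.self_subset_thickening hε _ ⟨x, hx, rfl⟩, ?_⟩
  have hnear : ∀ x, ∃ y ∈ B, x ∈ f ⁻¹' Metric.thickening ε (f '' B) → dist (f y) (f x) < ε := by
    intro x
    by_cases hx : x ∈ f ⁻¹' Metric.thickening ε (f '' B)
    · obtain ⟨_, ⟨y, hy, rfl⟩, hxy⟩ := Metric.mem_thickening_iff.1 hx
      exact ⟨y, hy, fun _ => by rwa [dist_comm]⟩
    · exact ⟨hB.some, hB.some_mem, fun h => absurd h hx⟩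
  choose g hgB hg using hnear
  exact ⟨g, hgB, hg⟩

lemma IsStep.integrableOn_Ico {E : Type*} [NormedAddCommGroup E] {g : ℝ → E} (h : IsStep g) :
    IntegrableOn g (Ico 0 1) := by
  obtain ⟨k, t, -, h0, h1, -, hconst⟩ := h
  have hcover := Ico_subset_biUnion_Ico k t
  rw [h0, h1] at hcover
  refine (integrableOn_finset_iUnion.2 fun j hj => ?_).mono_set hcover
  exact (integrableOn_congr_fun (hconst j (Finset.mem_range.1 hj)) measurableSet_Ico).2
    (integrableOn_const measure_Ico_lt_top.ne)

lemma IsStep.intervalIntegrable {E : Type*} [NormedAddCommGroup E] {g : ℝ → E} (h : IsStep g)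
    {a b : ℝ} (ha : 0 ≤ a) (hab : a ≤ b) (hb : b ≤ 1) : IntervalIntegrable g volume a b := by
  rw [intervalIntegrable_iff_integrableOn_Ioo_of_le hab]
  exact h.integrableOn_Ico.mono_set fun t ht => ⟨ha.trans ht.1.le, ht.2.trans_le hb⟩

namespace SIdx

variable {X : Type u} [TopologicalSpace X]

def withFun (s : SIdx X) (ψ : C(X, ℝ)) : SIdx X := { s with φ := ψ }

lemma apply_const_of_mem_HSet {ν : SIdx X → ℝ} (hν : ν ∈ HSet X) (s : SIdx X) (c : ℝ) :
    ν (s.withFun (ContinuousMap.const X c)) = c := by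
  refine (isClosed_eq (continuous_apply _) continuous_const).closure_subset_iff.2 ?_ hν
  rintro _ ⟨α, -, rfl⟩
  simp only [mem_ofPred_eq, eHM, withFun, ContinuousMap.const_apply,
    intervalIntegral.integral_const, smul_eq_mul]
  field_simp [sub_ne_zero.2 s.hab.ne']

lemma eHM_withFun_congr {α : ℝ → X} {B : Set X} (hα : ∀ t ∈ Ico (0 : ℝ) 1, α t ∈ B)
    {φ₁ φ₂ : C(X, ℝ)} (hφ : EqOn φ₁ φ₂ B) (s : SIdx X) :
    eHM α (s.withFun φ₁) = eHM α (s.withFun φ₂) := by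
  simp only [eHM, withFun, intervalIntegral.integral_of_le s.hab.le, integral_Ioc_eq_integral_Ioo]
  exact congrArg _ <| setIntegral_congr_fun measurableSet_Ioo fun t ht =>
    hφ (hα t ⟨s.ha.trans ht.1.le, ht.2.trans_le s.hb⟩)

lemma apply_withFun_eq_of_mem_HSetOn {ν : SIdx X → ℝ} {B : Set X} (hν : ν ∈ HSetOn X B)
    {φ₁ φ₂ : C(X, ℝ)} (hφ : EqOn φ₁ φ₂ B) (s : SIdx X) :
    ν (s.withFun φ₁) = ν (s.withFun φ₂) := by
  have hclosed : IsClosed {x : SIdx X → ℝ | x (s.withFun φ₁) = x (s.withFun φ₂)} :=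
    isClosed_eq (continuous_apply _) (continuous_apply _)
  refine hclosed.closure_subset_iff.2 ?_ hν
  rintro _ ⟨α, ⟨-, hαB⟩, rfl⟩
  exact eHM_withFun_congr hαB hφ s

lemma abs_eHM_sub_le {α β : ℝ → X} (hα : IsStep α) (hβ : IsStep β) (s : SIdx X) (u : C(X, ℝ))
    {ε c : ℝ} (h : ∀ t, |s.φ (α t) - s.φ (β t)| ≤ ε + c * u (β t)) :
    |eHM α s - eHM β s| ≤ ε + c * eHM β (s.withFun u) := by
  obtain ⟨φ, a, b, ha, hab, hb⟩ := s
  have hpos : 0 < b - a := sub_pos.2 hab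
  have hint : ∀ {γ : ℝ → X}, IsStep γ → ∀ ψ : C(X, ℝ),
      IntervalIntegrable (fun t => ψ (γ t)) volume a b :=
    fun hγ ψ => (isStep_comp ψ hγ).intervalIntegrable ha hab.le hb
  have hdiff := (hint hα φ).sub (hint hβ φ)
  calc |eHM α ⟨φ, a, b, ha, hab, hb⟩ - eHM β ⟨φ, a, b, ha, hab, hb⟩|
      = (b - a)⁻¹ * |∫ t in a..b, (φ (α t) - φ (β t))| := by
        rw [intervalIntegral.integral_sub (hint hα φ) (hint hβ φ), eHM, eHM, ← mul_sub,
          abs_mul, one_div, abs_of_pos (inv_pos.2 hpos)]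
    _ ≤ (b - a)⁻¹ * ∫ t in a..b, (ε + c * u (β t)) := by
        gcongr
        exact (intervalIntegral.abs_integral_le_integral_abs hab.le).trans
          (intervalIntegral.integral_mono_on hab.le hdiff.abs
            (intervalIntegrable_const.add ((hint hβ u).const_mul c)) fun t _ => h t)
    _ = ε + c * eHM β (withFun ⟨φ, a, b, ha, hab, hb⟩ u) := by
        rw [intervalIntegral.integral_add intervalIntegrable_const ((hint hβ u).const_mul c),
          intervalIntegral.integral_const, intervalIntegral.integral_const_mul, smul_eq_mul]
        simp only [eHM, withFun]
        field_simp

end SIdx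

lemma exists_isStep_mem_dist_lt_of_forall_apply_eq_zero {X : Type u} [TopologicalSpace X]
    [CompactSpace X] [T2Space X] {ν : SIdx X → ℝ} (hν : ν ∈ HSet X) {B : Set X}
    (hB : IsClosed B) (hB₀ : B.Nonempty)
    (hνB : ∀ (u : C(X, ℝ)) (s : SIdx X), EqOn u 0 B → ν (s.withFun u) = 0)
    (I : Finset (SIdx X)) {δ : ℝ} (hδ : 0 < δ) :
    ∃ α, IsStep α ∧ (∀ t ∈ Ico (0 : ℝ) 1, α t ∈ B) ∧ ∀ s ∈ I, dist (eHM α s) (ν s) < δ := by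
  classical
  set M := ∑ s ∈ I, ‖s.φ‖
  have hM₀ : 0 ≤ M := Finset.sum_nonneg fun s _ => norm_nonneg _
  have hM : ∀ s ∈ I, ∀ x, |s.φ x| ≤ M := fun s hs x =>
    (s.φ.norm_coe_le_norm x).trans (Finset.single_le_sum (fun s _ => norm_nonneg s.φ) hs)
  obtain ⟨U, hUo, hBU, g, hgB, hgU⟩ := exists_retraction_dist_lt_on_nhds
    (f := fun x (s : I) => s.1.φ x) (by fun_prop) hB₀ (half_pos hδ)
  obtain ⟨u, hu0, hu1, hu01⟩ := exists_continuous_zero_one_of_isClosed hB hUo.isClosed_compl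
    (disjoint_compl_right_iff_subset.2 hBU)
  set η := δ / (2 * (2 * M + 1))
  obtain ⟨_, ⟨β, hβ, rfl⟩, hβν⟩ := mem_closure_pi_iff_forall_finset.1 hν
    (I ∪ I.image (·.withFun u)) η (by positivity)
  refine ⟨g ∘ β, isStep_comp g hβ, fun t _ => hgB _, fun s hs => ?_⟩
  have hpoint : ∀ x, |s.φ (g x) - s.φ x| ≤ δ / 2 + 2 * M * u x := by
    intro x
    by_cases hx : x ∈ U
    · have hclose := (dist_le_pi_dist _ _ ⟨s, hs⟩).trans_lt (hgU x hx)
      rw [Real.dist_eq] at hclose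
      nlinarith [(hu01 x).1]
    · rw [hu1 hx, Pi.one_apply]
      linarith [abs_sub (s.φ (g x)) (s.φ x), hM s hs (g x), hM s hs x]
  have hu_small : eHM β (s.withFun u) < η := by
    have hclose := hβν _ (Finset.mem_union_right _ (Finset.mem_image_of_mem _ hs))
    rw [Real.dist_eq, hνB u s hu0, sub_zero] at hclose
    exact (le_abs_self _).trans_lt hclose
  have hβs := hβν s (Finset.mem_union_left _ hs)
  rw [Real.dist_eq] at hβs ⊢
  calc |eHM (g ∘ β) s - ν s| ≤ |eHM (g ∘ β) s - eHM β s| + |eHM β s - ν s| := abs_sub_le _ _ _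
    _ < (δ / 2 + 2 * M * η) + η := by
        refine add_lt_add_of_le_of_lt ?_ hβs
        refine (SIdx.abs_eHM_sub_le (isStep_comp g hβ) hβ s u fun t => hpoint (β t)).trans ?_
        gcongr
    _ = δ := by
        have hη : (2 * M + 1) * η = δ / 2 := by simp only [η]; field_simp
        linarith

/-- `ν ∈ H_X(B)` iff `ν` does not separate continuous functions agreeing on `B`. -/
theorem mem_HSetOn_iff_coords_eq {X : Type u} [TopologicalSpace X] [CompactSpace X]
    [T2Space X] (ν : SIdx X → ℝ) (hν : ν ∈ HSet X) (B : Set X) (hB : IsClosed B) :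
    ν ∈ HSetOn X B ↔
      ∀ (φ₁ φ₂ : C(X, ℝ)) (a b : ℝ) (ha : 0 ≤ a) (hab : a < b) (hb : b ≤ 1),
        (∀ x ∈ B, φ₁ x = φ₂ x) →
          ν ⟨φ₁, a, b, ha, hab, hb⟩ = ν ⟨φ₂, a, b, ha, hab, hb⟩ := by
  refine ⟨fun hmem φ₁ φ₂ a b ha hab hb hφ =>
    SIdx.apply_withFun_eq_of_mem_HSetOn hmem hφ ⟨φ₁, a, b, ha, hab, hb⟩, fun hyp => ?_⟩
  have hνB : ∀ (u : C(X, ℝ)) (s : SIdx X), EqOn u 0 B → ν (s.withFun u) = 0 := fun u s hu => by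
    rw [← SIdx.apply_const_of_mem_HSet hν s 0]
    exact hyp u _ s.a s.b s.ha s.hab s.hb hu
  have hB₀ : B.Nonempty := by
    by_contra! hempty
    have h10 := hνB (.const X 1) ⟨.const X 0, 0, 1, le_rfl, one_pos, le_rfl⟩ (by simp [hempty])
    exact one_ne_zero (SIdx.apply_const_of_mem_HSet hν _ 1 ▸ h10)
  refine mem_closure_pi_iff_forall_finset.2 fun I δ hδ => ?_
  obtain ⟨α, hα, hαB, hαν⟩ :=
    exists_isStep_mem_dist_lt_of_forall_apply_eq_zero hν hB hB₀ hνB I hδ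
  exact ⟨eHM α, ⟨α, ⟨hα, hαB⟩, rfl⟩, hαν⟩
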